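/- Let R ⊂ S be an integral FCP extension and let ᵘ_SR be the u-closure of R in S. Then: (1) for every M ∈ MSupp(S/R), the localization (ᵘ_SR)_M equals the u-closure of R_M in S_M; (2) for every ideal I of S contained in R (i.e., I ⊆ (R:S)), the quotient (ᵘ_SR)/I equals the u-closure of R/I in S/I. -/
import Mathlib


/-- An extension `R ⊆ S` has FCP if every chain of intermediate `R`-subalgebras of `S`
is finite. -/
def Algebra.HasFCP (R S : Type*) [CommRing R] [CommRing S] [Algebra R S] : Prop :=
  ∀ C : Set (Subalgebra R S), IsChain (· ≤ ·) C → C.Finite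

/-- `T` is u-closed in `B` if every `b ∈ B` with `b² − b ∈ T` and `b³ − b² ∈ T` lies in `T`. -/
def IsUClosedIn {A B : Type*} [CommRing A] [CommRing B] [Algebra A B]
    (T : Subalgebra A B) : Prop :=
  ∀ b : B, b ^ 2 - b ∈ T → b ^ 3 - b ^ 2 ∈ T → b ∈ T

section Key

variable {R S : Type*} [CommRing R] [CommRing S] [Algebra R S]

/-- The descending chain of subalgebras `U + w^k·U·s`. -/
def chainAlg (U : Subalgebra R S) (s w : S) (hw : w ∈ U) (h2 : s ^ 2 - w * s ∈ U)
    (k : ℕ) : Subalgebra R S where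
  carrier := {x | ∃ u ∈ U, ∃ z ∈ U, x = u + w ^ k * z * s}
  one_mem' := ⟨1, one_mem _, 0, zero_mem _, by ring⟩
  zero_mem' := ⟨0, zero_mem _, 0, zero_mem _, by ring⟩
  add_mem' := by
    rintro x y ⟨u₁, hu₁, z₁, hz₁, rfl⟩ ⟨u₂, hu₂, z₂, hz₂, rfl⟩
    exact ⟨u₁ + u₂, add_mem hu₁ hu₂, z₁ + z₂, add_mem hz₁ hz₂, by ring⟩
  mul_mem' := by
    rintro x y ⟨u₁, hu₁, z₁, hz₁, rfl⟩ ⟨u₂, hu₂, z₂, hz₂, rfl⟩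
    refine ⟨u₁ * u₂ + w ^ (2 * k) * (z₁ * z₂) * (s ^ 2 - w * s),
      add_mem (mul_mem hu₁ hu₂) (mul_mem (mul_mem (pow_mem hw _) (mul_mem hz₁ hz₂)) h2),
      u₁ * z₂ + u₂ * z₁ + w ^ (k + 1) * (z₁ * z₂),
      add_mem (add_mem (mul_mem hu₁ hz₂) (mul_mem hu₂ hz₁))
        (mul_mem (pow_mem hw _) (mul_mem hz₁ hz₂)), by ring⟩
  algebraMap_mem' := fun r =>
    ⟨algebraMap R S r, U.algebraMap_mem r, 0, zero_mem _, by ring⟩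

theorem uclosed_key (hFCP : Algebra.HasFCP R S) {U : Subalgebra R S} (hUc : IsUClosedIn U)
    (s w : S) (hw : w ∈ U) (h2 : s ^ 2 - w * s ∈ U) (h3 : s ^ 3 - w * s ^ 2 ∈ U) :
    ∃ n : ℕ, w ^ n * s ∈ U := by
  have hqs : (s ^ 2 - w * s) * s ∈ U := by
    have : (s ^ 2 - w * s) * s = s ^ 3 - w * s ^ 2 := by ring
    rwa [this]
  set P : S → Prop := fun x => x ∈ U ∧ x * s ∈ U with hP
  have hPadd : ∀ {x y}, P x → P y → P (x + y) := by
    rintro x y ⟨h1, h2⟩ ⟨h3, h4⟩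
    exact ⟨add_mem h1 h3, by rw [add_mul]; exact add_mem h2 h4⟩
  have hPmul : ∀ {a x}, a ∈ U → P x → P (a * x) := by
    rintro a x ha ⟨h1, h2⟩
    exact ⟨mul_mem ha h1, by rw [mul_assoc]; exact mul_mem ha h2⟩
  have hdagger : ∀ x, x ∈ U → P (w * x ^ 2 - x) → x * s ∈ U := by
    rintro x hx ⟨hd, hds⟩
    have hc2 : (x * s) ^ 2 - x * s ∈ U := by
      have e : (x * s) ^ 2 - x * s = x ^ 2 * (s ^ 2 - w * s) + (w * x ^ 2 - x) * s := by ring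
      rw [e]; exact add_mem (mul_mem (pow_mem hx 2) h2) hds
    have hc3 : (x * s) ^ 3 - (x * s) ^ 2 ∈ U := by
      have e : (x * s) ^ 3 - (x * s) ^ 2 =
          x ^ 3 * ((s ^ 2 - w * s) * s) + x * (w * x ^ 2 - x) * (s ^ 2 - w * s) +
            (w * x) * ((w * x ^ 2 - x) * s) := by ring
      rw [e]
      exact add_mem (add_mem (mul_mem (pow_mem hx 3) hqs)
        (mul_mem (mul_mem hx hd) h2)) (mul_mem (mul_mem hw hx) hds)
    exact hUc (x * s) hc2 hc3
  set T : ℕ → Subalgebra R S := fun k => chainAlg U s w hw h2 k with hT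
  have hmono : ∀ {k l}, k ≤ l → T l ≤ T k := by
    rintro k l hkl x ⟨u, hu, z, hz, rfl⟩
    refine ⟨u, hu, w ^ (l - k) * z, mul_mem (pow_mem hw _) hz, ?_⟩
    have : w ^ l = w ^ k * w ^ (l - k) := by
      rw [← pow_add]; congr 1; omega
    rw [this]; ring
  have hchain : IsChain (· ≤ ·) (Set.range T) := by
    rintro _ ⟨i, rfl⟩ _ ⟨j, rfl⟩ _
    rcases le_total i j with h | h
    · exact Or.inr (hmono h)
    · exact Or.inl (hmono h)
  have hninj : ¬ Function.Injective T := by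
    intro hinj
    exact (Set.infinite_range_of_injective hinj) (hFCP _ hchain)
  obtain ⟨k, l, hkl, hne⟩ := Function.not_injective_iff.mp hninj
  obtain ⟨k, l, hlt, hkl⟩ : ∃ k l : ℕ, k < l ∧ T k = T l := by
    rcases hne.lt_or_gt with h | h
    · exact ⟨k, l, h, hkl⟩
    · exact ⟨l, k, h, hkl.symm⟩
  have hmem : w ^ k * s ∈ T l := by
    rw [← hkl]; exact ⟨0, zero_mem _, 1, one_mem _, by ring⟩
  obtain ⟨u, hu, z, hz, heq⟩ := hmem
  set z₀ : S := w ^ (l - k - 1) * z with hz₀def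
  have hz₀ : z₀ ∈ U := mul_mem (pow_mem hw _) hz
  have hwl : w ^ (k + 1) * w ^ (l - k - 1) = w ^ l := by
    rw [← pow_add]; congr 1; omega
  have h0P : P (w ^ k - w ^ (k + 1) * z₀) := by
    constructor
    · exact sub_mem (pow_mem hw _) (mul_mem (pow_mem hw _) hz₀)
    · have e : (w ^ k - w ^ (k + 1) * z₀) * s = u := by
        rw [hz₀def, show w ^ (k + 1) * (w ^ (l - k - 1) * z) = w ^ l * z by
          rw [← mul_assoc, hwl]]
        linear_combination heq
      rw [e]; exact hu
  set p : S := w * z₀ with hp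
  have hpU : p ∈ U := mul_mem hw hz₀
  have hL1 : ∀ j : ℕ, P (w ^ k - w ^ k * p ^ j) := by
    intro j
    induction j with
    | zero => simpa using ⟨zero_mem U, by rw [zero_mul]; exact zero_mem U⟩
    | succ j ih =>
        have e : w ^ k - w ^ k * p ^ (j + 1) =
            (w ^ k - w ^ k * p ^ j) + p ^ j * (w ^ k - w ^ (k + 1) * z₀) := by
          rw [hp]; ring
        rw [e]; exact hPadd ih (hPmul (pow_mem hpU j) h0P)
  have hbase2 : P (p ^ (k + 1) - p ^ k) := by
    have e : p ^ (k + 1) - p ^ k = (-(z₀ ^ k)) * (w ^ k - w ^ (k + 1) * z₀) := by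
      rw [hp]; ring
    rw [e]; exact hPmul (neg_mem (pow_mem hz₀ k)) h0P
  have hL1' : ∀ j : ℕ, P (p ^ (k + j) - p ^ k) := by
    intro j
    induction j with
    | zero => simpa using ⟨zero_mem U, by rw [zero_mul]; exact zero_mem U⟩
    | succ j ih =>
        have e : p ^ (k + (j + 1)) - p ^ k =
            p * (p ^ (k + j) - p ^ k) + (p ^ (k + 1) - p ^ k) := by ring
        rw [e]; exact hPadd (hPmul hpU ih) hbase2
  have hus : (z₀ * p ^ k) * s ∈ U := by
    apply hdagger _ (mul_mem hz₀ (pow_mem hpU k))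
    have e : w * (z₀ * p ^ k) ^ 2 - z₀ * p ^ k = z₀ * (p ^ (k + (k + 1)) - p ^ k) := by
      rw [hp]; ring
    rw [e]; exact hPmul hz₀ (hL1' (k + 1))
  refine ⟨k, ?_⟩
  have e : w ^ k * s = (w ^ k - w ^ k * p ^ (k + 1)) * s + w ^ (k + 1) * ((z₀ * p ^ k) * s) := by
    rw [hp]; ring
  rw [e]
  exact add_mem (hL1 (k + 1)).2 (mul_mem (pow_mem hw _) hus)

end Key

section Helpers

/-- Pull back a subalgebra along a ring hom compatible with the algebra maps. -/
def pullbackAlg {R S R' S' : Type*} [CommRing R] [CommRing S] [CommRing R'] [CommRing S']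
    [Algebra R S] [Algebra R' S'] (g : S →+* S') (T' : Subalgebra R' S')
    (hcomp : ∀ r : R, g (algebraMap R S r) ∈ T') : Subalgebra R S where
  carrier := {x | g x ∈ T'}
  one_mem' := by simp only [Set.mem_setOf_eq, map_one]; exact one_mem T'
  zero_mem' := by simp only [Set.mem_setOf_eq, map_zero]; exact zero_mem T'
  add_mem' := by
    intro x y hx hy
    simp only [Set.mem_setOf_eq, map_add] at *
    exact add_mem hx hy
  mul_mem' := by
    intro x y hx hy
    simp only [Set.mem_setOf_eq, map_mul] at *
    exact mul_mem hx hy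
  algebraMap_mem' := hcomp

theorem pullbackAlg_uclosed {R S R' S' : Type*} [CommRing R] [CommRing S] [CommRing R']
    [CommRing S'] [Algebra R S] [Algebra R' S'] (g : S →+* S') (T' : Subalgebra R' S')
    (hcomp : ∀ r : R, g (algebraMap R S r) ∈ T') (hT' : IsUClosedIn T') :
    IsUClosedIn (pullbackAlg g T' hcomp) := by
  intro x hx1 hx2
  have k1 : g x ^ 2 - g x ∈ T' := by
    have e : g x ^ 2 - g x = g (x ^ 2 - x) := by rw [map_sub, map_pow]
    rw [e]; exact hx1
  have k2 : g x ^ 3 - g x ^ 2 ∈ T' := by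
    have e : g x ^ 3 - g x ^ 2 = g (x ^ 3 - x ^ 2) := by rw [map_sub, map_pow, map_pow]
    rw [e]; exact hx2
  exact hT' (g x) k1 k2

/-- The image subalgebra `g(U)` for `g` compatible with a surjection `f` on base rings. -/
def imageAlg {R S R' S' : Type*} [CommRing R] [CommRing S] [CommRing R'] [CommRing S']
    [Algebra R S] [Algebra R' S'] (f : R →+* R') (g : S →+* S') (hf : Function.Surjective f)
    (hcomp : ∀ r : R, algebraMap R' S' (f r) = g (algebraMap R S r))
    (U : Subalgebra R S) : Subalgebra R' S' where
  carrier := g '' (U : Set S)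
  one_mem' := ⟨1, one_mem U, map_one g⟩
  zero_mem' := ⟨0, zero_mem U, map_zero g⟩
  add_mem' := by
    rintro x y ⟨a, ha, rfl⟩ ⟨b, hb, rfl⟩
    exact ⟨a + b, add_mem ha hb, map_add g a b⟩
  mul_mem' := by
    rintro x y ⟨a, ha, rfl⟩ ⟨b, hb, rfl⟩
    exact ⟨a * b, mul_mem ha hb, map_mul g a b⟩
  algebraMap_mem' := by
    intro r'
    obtain ⟨r, rfl⟩ := hf r'
    exact ⟨algebraMap R S r, U.algebraMap_mem r, (hcomp r).symm⟩

/-- The subalgebra of the localization consisting of fractions `u/m` with `u ∈ U`. -/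
def locAlg {R S RM SM : Type*} [CommRing R] [CommRing S] [CommRing RM] [CommRing SM]
    [Algebra R S] [Algebra R RM] [Algebra R SM] [Algebra S SM] [Algebra RM SM]
    [IsScalarTower R RM SM] [IsScalarTower R S SM]
    (M : Ideal R) [M.IsMaximal] [IsLocalization.AtPrime RM M]
    (U : Subalgebra R S) : Subalgebra RM SM where
  carrier := {x | ∃ u ∈ U, ∃ m ∈ M.primeCompl,
    x * algebraMap S SM (algebraMap R S m) = algebraMap S SM u}
  one_mem' := ⟨1, one_mem _, 1, one_mem _, by simp⟩
  zero_mem' := ⟨0, zero_mem _, 1, one_mem _, by simp⟩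
  add_mem' := by
    rintro x y ⟨u₁, hu₁, m₁, hm₁, e₁⟩ ⟨u₂, hu₂, m₂, hm₂, e₂⟩
    refine ⟨u₁ * algebraMap R S m₂ + u₂ * algebraMap R S m₁,
      add_mem (mul_mem hu₁ (Subalgebra.algebraMap_mem U m₂))
        (mul_mem hu₂ (Subalgebra.algebraMap_mem U m₁)),
      m₁ * m₂, mul_mem hm₁ hm₂, ?_⟩
    simp only [map_mul, map_add]
    linear_combination algebraMap S SM (algebraMap R S m₂) * e₁ +
      algebraMap S SM (algebraMap R S m₁) * e₂
  mul_mem' := by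
    rintro x y ⟨u₁, hu₁, m₁, hm₁, e₁⟩ ⟨u₂, hu₂, m₂, hm₂, e₂⟩
    refine ⟨u₁ * u₂, mul_mem hu₁ hu₂, m₁ * m₂, mul_mem hm₁ hm₂, ?_⟩
    simp only [map_mul]
    linear_combination (y * algebraMap S SM (algebraMap R S m₂)) * e₁ +
      algebraMap S SM u₁ * e₂
  algebraMap_mem' := by
    intro r
    obtain ⟨⟨a, m⟩, hr⟩ := IsLocalization.surj M.primeCompl r
    refine ⟨algebraMap R S a, Subalgebra.algebraMap_mem U a, m, m.2, ?_⟩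
    have h1 : algebraMap S SM (algebraMap R S (m : R)) =
        algebraMap RM SM (algebraMap R RM (m : R)) := by
      rw [← IsScalarTower.algebraMap_apply, ← IsScalarTower.algebraMap_apply]
    have h2 : algebraMap S SM (algebraMap R S a) =
        algebraMap RM SM (algebraMap R RM a) := by
      rw [← IsScalarTower.algebraMap_apply, ← IsScalarTower.algebraMap_apply]
    rw [h1, h2, ← map_mul, hr]

end Helpers


/-- Let `R ⊂ S` be an integral FCP extension and `U = ᵘ_SR` its u-closure
(the least u-closed intermediate ring).  Then (1) for every maximal ideal
`M ∈ MSupp(S/R)`, the localization `U_M` is the u-closure of `R_M` in `S_M`; and (2) for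
every ideal `I` of `S` contained in `R`, the quotient `U/I` is the u-closure of `R/I` in
`S/I`. -/
theorem stmt7 {R S : Type*} [CommRing R] [CommRing S] [Algebra R S]
    (hinj : Function.Injective (algebraMap R S))
    (hproper : (⊥ : Subalgebra R S) ≠ ⊤)
    (hFCP : Algebra.HasFCP R S)
    (hint : Algebra.IsIntegral R S)
    (U : Subalgebra R S)
    (hU : IsLeast {T : Subalgebra R S | IsUClosedIn T} U) :
    (∀ (M : Ideal R) [M.IsMaximal],
      Nontrivial (LocalizedModule M.primeCompl (S ⧸ LinearMap.range (Algebra.linearMap R S))) →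
      ∀ (RM SM : Type*) [CommRing RM] [CommRing SM]
        [Algebra R RM] [Algebra R SM] [Algebra S SM] [Algebra RM SM]
        [IsScalarTower R RM SM] [IsScalarTower R S SM]
        [IsLocalization.AtPrime RM M]
        [IsLocalization (Algebra.algebraMapSubmonoid S M.primeCompl) SM],
        IsLeast {T : Subalgebra RM SM | IsUClosedIn T}
          (Algebra.adjoin RM (algebraMap S SM '' (U : Set S)))) ∧
    (∀ I : Ideal S, (I : Set S) ⊆ Set.range (algebraMap R S) →
      ∀ (R' S' : Type*) [CommRing R'] [CommRing S'] [Algebra R' S']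
        (f : R →+* R') (g : S →+* S'),
        Function.Surjective f → Function.Surjective g →
        RingHom.ker f = I.comap (algebraMap R S) → RingHom.ker g = I →
        (algebraMap R' S').comp f = g.comp (algebraMap R S) →
        IsLeast {T : Subalgebra R' S' | IsUClosedIn T}
          (Algebra.adjoin R' (g '' (U : Set S)))) := by
  constructor
  · -- Part (1): localization
    intro M hM _ RM SM _ _ _ _ _ _ _ _ _ _
    have hcompat : ∀ r : R, (algebraMap S SM) (algebraMap R S r) ∈ (⊤ : Subalgebra RM SM) :=
      fun _ => trivial
    have hVD : Algebra.adjoin RM (algebraMap S SM '' (U : Set S)) ≤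
        locAlg (RM := RM) M U := by
      apply Algebra.adjoin_le
      rintro _ ⟨u, hu, rfl⟩
      exact ⟨u, hu, 1, one_mem _, by simp⟩
    have hDV : ∀ x, x ∈ locAlg (RM := RM) M U →
        x ∈ Algebra.adjoin RM (algebraMap S SM '' (U : Set S)) := by
      rintro x ⟨u, hu, m, hm, e⟩
      have hj : (algebraMap RM SM (IsLocalization.mk' RM (1 : R) ⟨m, hm⟩)) *
          algebraMap RM SM (algebraMap R RM m) = 1 := by
        rw [← map_mul, IsLocalization.mk'_spec, map_one, map_one]
      have hminv : algebraMap S SM (algebraMap R S m) =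
          algebraMap RM SM (algebraMap R RM m) := by
        rw [← IsScalarTower.algebraMap_apply, ← IsScalarTower.algebraMap_apply]
      have hx : x = algebraMap S SM u *
          algebraMap RM SM (IsLocalization.mk' RM (1 : R) ⟨m, hm⟩) := by
        calc x = x * (algebraMap RM SM (algebraMap R RM m) *
            algebraMap RM SM (IsLocalization.mk' RM (1 : R) ⟨m, hm⟩)) := by
              rw [mul_comm (algebraMap RM SM (algebraMap R RM m)), hj, mul_one]
          _ = (x * algebraMap S SM (algebraMap R S m)) *
              algebraMap RM SM (IsLocalization.mk' RM (1 : R) ⟨m, hm⟩) := by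
              rw [hminv]; ring
          _ = algebraMap S SM u *
              algebraMap RM SM (IsLocalization.mk' RM (1 : R) ⟨m, hm⟩) := by rw [e]
      rw [hx]
      exact mul_mem (Algebra.subset_adjoin ⟨u, hu, rfl⟩)
        (Subalgebra.algebraMap_mem _ _)
    constructor
    · -- membership: the adjoin is u-closed
      intro b h1 h2
      obtain ⟨u₁, hu₁, m₁, hm₁, E1⟩ := hVD h1
      obtain ⟨u₂, hu₂, m₂, hm₂, E2⟩ := hVD h2
      obtain ⟨⟨s₀, n₀⟩, hb⟩ :=
        IsLocalization.surj (Algebra.algebraMapSubmonoid S M.primeCompl) b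
      obtain ⟨m₀, hm₀, hm₀'⟩ := Submonoid.mem_map.mp n₀.2
      have E0 : b * algebraMap S SM (algebraMap R S m₀) = algebraMap S SM s₀ := by
        rw [hm₀']; exact hb
      obtain ⟨ω, s, hωM, H2, H3, Bs⟩ : ∃ (ω : R) (s : S), ω ∈ M.primeCompl ∧
          s ^ 2 - algebraMap R S ω * s ∈ U ∧ s ^ 3 - algebraMap R S ω * s ^ 2 ∈ U ∧
          algebraMap S SM s = b * algebraMap S SM (algebraMap R S ω) := by
        have K1 : algebraMap S SM
            ((s₀ * (algebraMap R S m₁ * algebraMap R S m₂)) ^ 2 -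
              algebraMap R S m₀ * algebraMap R S m₁ * algebraMap R S m₂ *
                (s₀ * (algebraMap R S m₁ * algebraMap R S m₂)) -
              u₁ * (algebraMap R S m₀ ^ 2 * algebraMap R S m₁ * algebraMap R S m₂ ^ 2)) = 0 := by
          simp only [map_sub, map_mul, map_pow]
          rw [← E0]
          linear_combination (algebraMap S SM (algebraMap R S m₀) ^ 2 *
            algebraMap S SM (algebraMap R S m₁) * algebraMap S SM (algebraMap R S m₂) ^ 2) * E1
        have K2 : algebraMap S SM
            ((s₀ * (algebraMap R S m₁ * algebraMap R S m₂)) ^ 3 -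
              algebraMap R S m₀ * algebraMap R S m₁ * algebraMap R S m₂ *
                (s₀ * (algebraMap R S m₁ * algebraMap R S m₂)) ^ 2 -
              u₂ * (algebraMap R S m₀ ^ 3 * algebraMap R S m₁ ^ 3 *
                algebraMap R S m₂ ^ 2)) = 0 := by
          simp only [map_sub, map_mul, map_pow]
          rw [← E0]
          linear_combination (algebraMap S SM (algebraMap R S m₀) ^ 3 *
            algebraMap S SM (algebraMap R S m₁) ^ 3 *
            algebraMap S SM (algebraMap R S m₂) ^ 2) * E2
        obtain ⟨n₃, hn₃⟩ := (IsLocalization.map_eq_zero_iff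
          (Algebra.algebraMapSubmonoid S M.primeCompl) SM _).mp K1
        obtain ⟨m₃, hm₃, hm₃'⟩ := Submonoid.mem_map.mp n₃.2
        have T1 : algebraMap R S m₃ *
            ((s₀ * (algebraMap R S m₁ * algebraMap R S m₂)) ^ 2 -
              algebraMap R S m₀ * algebraMap R S m₁ * algebraMap R S m₂ *
                (s₀ * (algebraMap R S m₁ * algebraMap R S m₂)) -
              u₁ * (algebraMap R S m₀ ^ 2 * algebraMap R S m₁ * algebraMap R S m₂ ^ 2)) = 0 := by
          rw [hm₃']; exact hn₃
        obtain ⟨n₄, hn₄⟩ := (IsLocalization.map_eq_zero_iff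
          (Algebra.algebraMapSubmonoid S M.primeCompl) SM _).mp K2
        obtain ⟨m₄, hm₄, hm₄'⟩ := Submonoid.mem_map.mp n₄.2
        have T2 : algebraMap R S m₄ *
            ((s₀ * (algebraMap R S m₁ * algebraMap R S m₂)) ^ 3 -
              algebraMap R S m₀ * algebraMap R S m₁ * algebraMap R S m₂ *
                (s₀ * (algebraMap R S m₁ * algebraMap R S m₂)) ^ 2 -
              u₂ * (algebraMap R S m₀ ^ 3 * algebraMap R S m₁ ^ 3 *
                algebraMap R S m₂ ^ 2)) = 0 := by
          rw [hm₄']; exact hn₄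
        refine ⟨m₀ * m₁ * m₂ * (m₃ * m₄),
          algebraMap R S m₃ * algebraMap R S m₄ *
            (s₀ * (algebraMap R S m₁ * algebraMap R S m₂)),
          mul_mem (mul_mem (mul_mem hm₀ hm₁) hm₂) (mul_mem hm₃ hm₄), ?_, ?_, ?_⟩
        · have e : (algebraMap R S m₃ * algebraMap R S m₄ *
              (s₀ * (algebraMap R S m₁ * algebraMap R S m₂))) ^ 2 -
              algebraMap R S (m₀ * m₁ * m₂ * (m₃ * m₄)) *
                (algebraMap R S m₃ * algebraMap R S m₄ *
                  (s₀ * (algebraMap R S m₁ * algebraMap R S m₂))) =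
              (algebraMap R S m₃ * algebraMap R S m₄) ^ 2 *
              (u₁ * (algebraMap R S m₀ ^ 2 * algebraMap R S m₁ * algebraMap R S m₂ ^ 2)) := by
            simp only [map_mul]
            linear_combination (algebraMap R S m₃ * algebraMap R S m₄ ^ 2) * T1
          rw [e]
          exact mul_mem (pow_mem (mul_mem (U.algebraMap_mem m₃) (U.algebraMap_mem m₄)) 2)
            (mul_mem hu₁ (mul_mem (mul_mem (pow_mem (U.algebraMap_mem m₀) 2)
              (U.algebraMap_mem m₁)) (pow_mem (U.algebraMap_mem m₂) 2)))
        · have e : (algebraMap R S m₃ * algebraMap R S m₄ *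
              (s₀ * (algebraMap R S m₁ * algebraMap R S m₂))) ^ 3 -
              algebraMap R S (m₀ * m₁ * m₂ * (m₃ * m₄)) *
                (algebraMap R S m₃ * algebraMap R S m₄ *
                  (s₀ * (algebraMap R S m₁ * algebraMap R S m₂))) ^ 2 =
              (algebraMap R S m₃ * algebraMap R S m₄) ^ 3 *
              (u₂ * (algebraMap R S m₀ ^ 3 * algebraMap R S m₁ ^ 3 *
                algebraMap R S m₂ ^ 2)) := by
            simp only [map_mul]
            linear_combination (algebraMap R S m₃ ^ 3 * algebraMap R S m₄ ^ 2) * T2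
          rw [e]
          exact mul_mem (pow_mem (mul_mem (U.algebraMap_mem m₃) (U.algebraMap_mem m₄)) 3)
            (mul_mem hu₂ (mul_mem (mul_mem (pow_mem (U.algebraMap_mem m₀) 3)
              (pow_mem (U.algebraMap_mem m₁) 3)) (pow_mem (U.algebraMap_mem m₂) 2)))
        · simp only [map_mul]
          linear_combination (-(algebraMap S SM (algebraMap R S m₁) *
            algebraMap S SM (algebraMap R S m₂) * (algebraMap S SM (algebraMap R S m₃) *
            algebraMap S SM (algebraMap R S m₄)))) * E0
      obtain ⟨n, hn⟩ := uclosed_key hFCP hU.1 s (algebraMap R S ω) (U.algebraMap_mem ω) H2 H3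
      apply hDV
      refine ⟨algebraMap R S ω ^ n * s, hn, ω ^ (n + 1), pow_mem hωM (n + 1), ?_⟩
      simp only [map_pow, map_mul]
      linear_combination (-(algebraMap S SM (algebraMap R S ω) ^ n)) * Bs
    · -- lower bound
      intro T' hT'
      have hc : ∀ r : R, (algebraMap S SM) (algebraMap R S r) ∈ T' := by
        intro r
        have h1 : algebraMap S SM (algebraMap R S r) =
            algebraMap RM SM (algebraMap R RM r) := by
          rw [← IsScalarTower.algebraMap_apply, ← IsScalarTower.algebraMap_apply]
        rw [h1]
        exact T'.algebraMap_mem _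
      have hTu : IsUClosedIn (pullbackAlg (R := R) (algebraMap S SM) T' hc) := by
        exact pullbackAlg_uclosed _ T' hc hT'
      apply Algebra.adjoin_le
      rintro _ ⟨u, hu, rfl⟩
      exact hU.2 hTu hu
  · -- Part (2): quotient
    intro I hI R' S' _ _ _ f g hf hg hkf hkg hcomp
    have hcompfun : ∀ r : R, algebraMap R' S' (f r) = g (algebraMap R S r) :=
      fun r => RingHom.congr_fun hcomp r
    have hker : ∀ x : S, g x = 0 → x ∈ U := by
      intro x hx
      have hxI : x ∈ I := hkg ▸ hx
      obtain ⟨r, hr⟩ := hI hxI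
      rw [← hr]; exact U.algebraMap_mem r
    have hadj : Algebra.adjoin R' (g '' (U : Set S)) = imageAlg f g hf hcompfun U := by
      apply le_antisymm
      · exact Algebra.adjoin_le (fun x hx => hx)
      · exact Algebra.subset_adjoin
    rw [hadj]
    constructor
    · -- the image is u-closed
      intro b' h1 h2
      obtain ⟨b, rfl⟩ := hg b'
      obtain ⟨u₁, hu₁, e₁⟩ := h1
      obtain ⟨u₂, hu₂, e₂⟩ := h2
      have k1 : b ^ 2 - b ∈ U := by
        have h0 : g (b ^ 2 - b - u₁) = 0 := by
          rw [map_sub, map_sub, map_pow, e₁]; ring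
        have h := hker _ h0
        have e : b ^ 2 - b = (b ^ 2 - b - u₁) + u₁ := by ring
        rw [e]; exact add_mem h hu₁
      have k2 : b ^ 3 - b ^ 2 ∈ U := by
        have h0 : g (b ^ 3 - b ^ 2 - u₂) = 0 := by
          rw [map_sub, map_sub, map_pow, map_pow, e₂]; ring
        have h := hker _ h0
        have e : b ^ 3 - b ^ 2 = (b ^ 3 - b ^ 2 - u₂) + u₂ := by ring
        rw [e]; exact add_mem h hu₂
      exact ⟨b, hU.1 b k1 k2, rfl⟩
    · -- lower bound
      intro T' hT'
      have hc : ∀ r : R, g (algebraMap R S r) ∈ T' := by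
        intro r
        rw [← hcompfun r]
        exact T'.algebraMap_mem _
      have hTu : IsUClosedIn (pullbackAlg (R := R) g T' hc) := pullbackAlg_uclosed g T' hc hT'
      rintro _ ⟨u, hu, rfl⟩
      exact hU.2 hTu hu
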